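/- Let V be a vertex algebra and M a V-module. Define C₂(M) = span{a_{(−2)} m : a ∈ V, m ∈ M}. Then M/C₂(M) is a Poisson module over the Poisson algebra R_V = V/C₂(V), with actions ā·m̄ = (a_{(−1)}m)⁻ and {ā, m̄} = (a_{(0)}m)⁻; in particular these operations are well-defined on the quotients. -/

import Mathlib

/-- The generalized binomial coefficient `(p choose i)` for `p : ℤ`, as a complex number. -/
noncomputable def cc (p : ℤ) (i : ℕ) : ℂ :=
  (∏ k ∈ Finset.range i, ((p : ℂ) - (k : ℂ))) / (Nat.factorial i : ℂ)

/-- A vertex algebra structure on a complex vector space `V`: a vacuum `one`,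
bilinear products `nmul n a b = a_{(n)} b`, truncation, vacuum axioms, and the
Borcherds identity. -/
structure VertexAlg (V : Type*) [AddCommGroup V] [Module ℂ V] where
  one : V
  nmul : ℤ → V → V → V
  nmul_add_left : ∀ (n : ℤ) (a b c : V), nmul n (a + b) c = nmul n a c + nmul n b c
  nmul_add_right : ∀ (n : ℤ) (a b c : V), nmul n a (b + c) = nmul n a b + nmul n a c
  nmul_smul_left : ∀ (n : ℤ) (s : ℂ) (a b : V), nmul n (s • a) b = s • nmul n a b
  nmul_smul_right : ∀ (n : ℤ) (s : ℂ) (a b : V), nmul n a (s • b) = s • nmul n a b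
  one_nmul : ∀ (n : ℤ) (b : V), nmul n one b = if n = -1 then b else 0
  nmul_neg_one_one : ∀ a : V, nmul (-1) a one = a
  nmul_one : ∀ (a : V) (n : ℤ), 0 ≤ n → nmul n a one = 0
  trunc : ∀ a b : V, ∃ N : ℤ, ∀ n : ℤ, N ≤ n → nmul n a b = 0
  borcherds : ∀ (p q r : ℤ) (a b c : V),
    (∑ᶠ i : ℕ, cc p i • nmul (p + q - i) (nmul (r + i) a b) c)
      = ∑ᶠ i : ℕ, ((-1 : ℂ) ^ i * cc r i) •
          (nmul (p + r - i) a (nmul (q + i) b c)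
            - ((-1 : ℂ) ^ r) • nmul (q + r - i) b (nmul (p + i) a c))

/-- A module over a vertex algebra `(V, 𝒱)`: operators `act n a = a_{(n)}` on `M`
satisfying bilinearity, the vacuum axiom, truncation and the Borcherds identity. -/
structure VAModuleStr {V : Type*} [AddCommGroup V] [Module ℂ V] (𝒱 : VertexAlg V)
    (M : Type*) [AddCommGroup M] [Module ℂ M] where
  act : ℤ → V → M → M
  act_add_left : ∀ (n : ℤ) (a b : V) (m : M), act n (a + b) m = act n a m + act n b m
  act_add_right : ∀ (n : ℤ) (a : V) (m m' : M), act n a (m + m') = act n a m + act n a m'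
  act_smul_left : ∀ (n : ℤ) (s : ℂ) (a : V) (m : M), act n (s • a) m = s • act n a m
  act_smul_right : ∀ (n : ℤ) (s : ℂ) (a : V) (m : M), act n a (s • m) = s • act n a m
  one_act : ∀ (n : ℤ) (m : M), act n 𝒱.one m = if n = -1 then m else 0
  trunc : ∀ (a : V) (m : M), ∃ N : ℤ, ∀ n : ℤ, N ≤ n → act n a m = 0
  borcherds : ∀ (p q r : ℤ) (a b : V) (m : M),
    (∑ᶠ i : ℕ, cc p i • act (p + q - i) (𝒱.nmul (r + i) a b) m)
      = ∑ᶠ i : ℕ, ((-1 : ℂ) ^ i * cc r i) •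
          (act (p + r - i) a (act (q + i) b m)
            - ((-1 : ℂ) ^ r) • act (q + r - i) b (act (p + i) a m))

/-!
For `n ≤ -2` every mode `a_{(n)} m` lies in `C₂(M)`, by induction downwards using
`(Ta)_{(n)} = -n a_{(n-1)}`. The commutator and associativity formulas (the Borcherds identity at
`r = 0` and at `p = 0`) write `a_{(p)} b_{(-2)} m` and `(b_{(-2)} c)_{(q)} m`, for `p, q ≤ 0`, as
`b_{(-2)} a_{(p)} m` plus combinations of such low modes, so every `a_{(n)}` with `n ≤ 0` descends
to a bilinear map `R_V × M/C₂(M) → M/C₂(M)`. The commutator formula at `p = 0` gives the Jacobi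
and Leibniz rules on the nose, and the associativity formula gives
`(a_{(-1)} b)_{(0)} ≡ a_{(-1)} b_{(0)} + b_{(-1)} a_{(0)}` modulo `C₂(M)`, all other terms being
modes of index `≤ -2`.
-/

lemma cc_zero_right (p : ℤ) : cc p 0 = 1 := by simp [cc]

lemma cc_one_right (p : ℤ) : cc p 1 = p := by simp [cc]

lemma cc_zero_left {i : ℕ} (hi : i ≠ 0) : cc 0 i = 0 := by
  rw [cc, Finset.prod_eq_zero (Finset.mem_range.2 (Nat.pos_of_ne_zero hi)) (by simp), zero_div]

lemma Submodule.finsum_sub_mem {R α N : Type*} [Ring R] [AddCommGroup N] [Module R N]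
    {S : Submodule R N} {f : α → N} (hf : (Function.support f).Finite) (i₀ : α)
    (h : ∀ i, i ≠ i₀ → f i ∈ S) : ∑ᶠ i, f i - f i₀ ∈ S := by
  rw [← Submodule.Quotient.eq, ← S.mkQ_apply, map_finsum _ hf, finsum_eq_single _ i₀
    fun i hi => (S.mkQ_apply _).trans ((Submodule.Quotient.mk_eq_zero S).2 (h i hi))]
  rfl

lemma Submodule.finsum_mem {R α N : Type*} [Semiring R] [AddCommMonoid N] [Module R N]
    {S : Submodule R N} {f : α → N} (h : ∀ i, f i ∈ S) : ∑ᶠ i, f i ∈ S :=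
  finsum_induction (· ∈ S) S.zero_mem (fun _ _ => S.add_mem) h

lemma support_finite_of_forall_le {N : Type*} [Zero N] {f : ℕ → N} (n : ℕ)
    (h : ∀ i, n ≤ i → f i = 0) : (Function.support f).Finite :=
  (Set.finite_Iio n).subset fun i hi => not_le.1 fun hni => hi (h i hni)

def VertexAlg.selfModule {V : Type*} [AddCommGroup V] [Module ℂ V] (𝒱 : VertexAlg V) :
    VAModuleStr 𝒱 V where
  act := 𝒱.nmul
  act_add_left := 𝒱.nmul_add_left
  act_add_right := 𝒱.nmul_add_right
  act_smul_left := 𝒱.nmul_smul_left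
  act_smul_right := 𝒱.nmul_smul_right
  one_act := 𝒱.one_nmul
  trunc := 𝒱.trunc
  borcherds := 𝒱.borcherds

@[simp]
lemma VertexAlg.selfModule_act {V : Type*} [AddCommGroup V] [Module ℂ V] (𝒱 : VertexAlg V) :
    𝒱.selfModule.act = 𝒱.nmul := rfl

namespace VAModuleStr

variable {V : Type*} [AddCommGroup V] [Module ℂ V] {𝒱 : VertexAlg V}
variable {M : Type*} [AddCommGroup M] [Module ℂ M] (𝓜 : VAModuleStr 𝒱 M)

def actₗ (n : ℤ) : V →ₗ[ℂ] M →ₗ[ℂ] M :=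
  LinearMap.mk₂ ℂ (𝓜.act n) (𝓜.act_add_left n) (𝓜.act_smul_left n) (𝓜.act_add_right n)
    (𝓜.act_smul_right n)

@[simp]
lemma act_zero_left (n : ℤ) (m : M) : 𝓜.act n 0 m = 0 :=
  (𝓜.actₗ n).map_zero₂ m

@[simp]
lemma act_zero_right (n : ℤ) (a : V) : 𝓜.act n a 0 = 0 :=
  (𝓜.actₗ n a).map_zero

lemma one_act_of_ne {n : ℤ} (hn : n ≠ -1) (m : M) : 𝓜.act n 𝒱.one m = 0 := by
  rw [𝓜.one_act, if_neg hn]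

def C₂ : Submodule ℂ M := Submodule.span ℂ {y | ∃ (a : V) (m : M), y = 𝓜.act (-2) a m}

lemma act_neg_two_mem_C₂ (a : V) (m : M) : 𝓜.act (-2) a m ∈ 𝓜.C₂ :=
  Submodule.subset_span ⟨a, m, rfl⟩

lemma act_commutator (p q : ℤ) (a b : V) (m : M) :
    𝓜.act p a (𝓜.act q b m) - 𝓜.act q b (𝓜.act p a m)
      = ∑ᶠ i : ℕ, cc p i • 𝓜.act (p + q - i) (𝒱.nmul i a b) m := by
  have h := 𝓜.borcherds p q 0 a b m
  conv_rhs at h =>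
    rw [finsum_eq_single _ 0 fun i hi => by rw [cc_zero_left hi, mul_zero, zero_smul]]
  simpa [cc_zero_right] using h.symm

lemma act_nmul_zero (q : ℤ) (a b : V) (m : M) :
    𝓜.act q (𝒱.nmul 0 a b) m = 𝓜.act 0 a (𝓜.act q b m) - 𝓜.act q b (𝓜.act 0 a m) := by
  rw [act_commutator, finsum_eq_single _ 0 fun i hi => by rw [cc_zero_left hi, zero_smul]]
  simp [cc_zero_right]

lemma act_nmul (q r : ℤ) (a b : V) (m : M) :
    𝓜.act q (𝒱.nmul r a b) m
      = ∑ᶠ i : ℕ, ((-1 : ℂ) ^ i * cc r i) •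
          (𝓜.act (r - i) a (𝓜.act (q + i) b m)
            - ((-1 : ℂ) ^ r) • 𝓜.act (q + r - i) b (𝓜.act i a m)) := by
  have h := 𝓜.borcherds 0 q r a b m
  rw [finsum_eq_single _ 0 fun i hi => by rw [cc_zero_left hi, zero_smul]] at h
  simpa [cc_zero_right] using h

-- `a_{(-2)}𝟙` is the translate `T a`.
lemma act_translation (n : ℤ) (a : V) (m : M) :
    𝓜.act n (𝒱.nmul (-2) a 𝒱.one) m = (-n : ℂ) • 𝓜.act (n - 1) a m := by
  have h := 𝓜.borcherds (n + 1) (-1) (-2) a 𝒱.one m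
  have hsupp : Function.support (fun i : ℕ =>
      cc (n + 1) i • 𝓜.act (n + 1 + -1 - i) (𝒱.nmul (-2 + i) a 𝒱.one) m) ⊆ Finset.range 2 := by
    intro i hi
    by_contra hi2
    simp only [Finset.coe_range, Set.mem_Iio, not_lt] at hi2
    exact hi (by dsimp only; rw [𝒱.nmul_one _ _ (by omega), act_zero_left, smul_zero])
  rw [finsum_eq_finsetSum_of_support_subset _ hsupp, Finset.sum_range_succ, Finset.sum_range_one,
    finsum_eq_single _ 0 fun i hi => by
      rw [one_act_of_ne _ (by omega), one_act_of_ne _ (by omega)]; simp] at h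
  simp only [cc_zero_right, Int.reduceNeg, add_neg_cancel_right, CharP.cast_eq_zero, sub_zero,
    add_zero, one_smul, cc_one_right, Int.cast_add, Int.cast_one, Nat.cast_one, Int.reduceAdd,
    𝒱.nmul_neg_one_one, pow_zero, mul_one, 𝓜.one_act, ↓reduceIte, zpow_neg, zpow_ofNat, even_two,
    Even.neg_pow, one_pow, inv_one, neg_inj, OfNat.ofNat_ne_one, smul_zero] at h
  rw [show n + 1 + -2 = n - 1 by ring] at h
  rw [eq_sub_of_add_eq h, add_smul, one_smul, neg_smul]
  abel

lemma act_mem_C₂_of_le {n : ℤ} (hn : n ≤ -2) (a : V) (m : M) : 𝓜.act n a m ∈ 𝓜.C₂ := by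
  induction n, hn using Int.leInductionDown generalizing a m with
  | base => exact 𝓜.act_neg_two_mem_C₂ a m
  | pred n hn ih =>
    have hn0 : (-n : ℂ) ≠ 0 := by norm_cast; omega
    rw [← inv_smul_smul₀ hn0 (𝓜.act (n - 1) a m), ← act_translation]
    exact 𝓜.C₂.smul_mem _ (ih _ m)

lemma act_nmul_neg_two_mem_C₂ {q : ℤ} (hq : q ≤ 0) (b c : V) (m : M) :
    𝓜.act q (𝒱.nmul (-2) b c) m ∈ 𝓜.C₂ := by
  rw [act_nmul]
  exact Submodule.finsum_mem fun i => 𝓜.C₂.smul_mem _ <| sub_mem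
    (𝓜.act_mem_C₂_of_le (by omega) _ _)
    (𝓜.C₂.smul_mem _ (𝓜.act_mem_C₂_of_le (by omega) _ _))

lemma act_act_neg_two_mem_C₂ {p : ℤ} (hp : p ≤ 0) (a b : V) (m : M) :
    𝓜.act p a (𝓜.act (-2) b m) ∈ 𝓜.C₂ := by
  rw [← sub_add_cancel (𝓜.act p a _) (𝓜.act (-2) b (𝓜.act p a m)), act_commutator]
  exact add_mem
    (Submodule.finsum_mem fun i => 𝓜.C₂.smul_mem _ (𝓜.act_mem_C₂_of_le (by omega) _ _))
    (𝓜.act_neg_two_mem_C₂ _ _)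

lemma C₂_le_ker_act {q : ℤ} (hq : q ≤ 0) :
    𝒱.selfModule.C₂ ≤ ((𝓜.actₗ q).compr₂ 𝓜.C₂.mkQ).ker := by
  refine Submodule.span_le.2 ?_
  rintro _ ⟨b, c, rfl⟩
  ext m
  exact (Submodule.Quotient.mk_eq_zero _).2 (𝓜.act_nmul_neg_two_mem_C₂ hq b c m)

lemma C₂_le_ker_flip_act {p : ℤ} (hp : p ≤ 0) :
    𝓜.C₂ ≤ ((𝓜.actₗ p).compr₂ 𝓜.C₂.mkQ).flip.ker := by
  refine Submodule.span_le.2 ?_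
  rintro _ ⟨b, m, rfl⟩
  ext a
  exact (Submodule.Quotient.mk_eq_zero _).2 (𝓜.act_act_neg_two_mem_C₂ hp a b m)

def quotAct (n : ℤ) (hn : n ≤ 0) :
    V ⧸ 𝒱.selfModule.C₂ →ₗ[ℂ] M ⧸ 𝓜.C₂ →ₗ[ℂ] M ⧸ 𝓜.C₂ :=
  ((𝓜.actₗ n).compr₂ 𝓜.C₂.mkQ).liftQ₂ _ _ (𝓜.C₂_le_ker_act hn) (𝓜.C₂_le_ker_flip_act hn)

@[simp]
lemma quotAct_mk (n : ℤ) (hn : n ≤ 0) (a : V) (m : M) :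
    𝓜.quotAct n hn (Submodule.Quotient.mk a) (Submodule.Quotient.mk m) =
      Submodule.Quotient.mk (𝓜.act n a m) := rfl

lemma act_zero_nmul_neg_one_sub_mem_C₂ (a b : V) (m : M) :
    𝓜.act 0 (𝒱.nmul (-1) a b) m
      - (𝓜.act (-1) a (𝓜.act 0 b m) + 𝓜.act (-1) b (𝓜.act 0 a m)) ∈ 𝓜.C₂ := by
  obtain ⟨Na, hNa⟩ := 𝓜.trunc a m
  obtain ⟨Nb, hNb⟩ := 𝓜.trunc b m
  have key := Submodule.finsum_sub_mem (S := 𝓜.C₂)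
    (f := fun i : ℕ => ((-1 : ℂ) ^ i * cc (-1) i) • (𝓜.act (-1 - i) a (𝓜.act (0 + i) b m)
      - ((-1 : ℂ) ^ (-1 : ℤ)) • 𝓜.act (0 + -1 - i) b (𝓜.act i a m)))
    (support_finite_of_forall_le (max Na Nb).toNat fun i hi => by
      rw [hNb _ (by omega), hNa _ (by omega)]; simp) 0
    fun i hi => 𝓜.C₂.smul_mem _ <| sub_mem (𝓜.act_mem_C₂_of_le (by omega) _ _)
      (𝓜.C₂.smul_mem _ (𝓜.act_mem_C₂_of_le (by omega) _ _))
  rw [act_nmul]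
  convert key using 2
  norm_num [cc_zero_right]

abbrev quotMul : V ⧸ 𝒱.selfModule.C₂ →ₗ[ℂ] M ⧸ 𝓜.C₂ →ₗ[ℂ] M ⧸ 𝓜.C₂ :=
  𝓜.quotAct (-1) (by norm_num)

abbrev quotBracket : V ⧸ 𝒱.selfModule.C₂ →ₗ[ℂ] M ⧸ 𝓜.C₂ →ₗ[ℂ] M ⧸ 𝓜.C₂ :=
  𝓜.quotAct 0 le_rfl

lemma quotBracket_quotBracket (r s : V ⧸ 𝒱.selfModule.C₂) (m : M ⧸ 𝓜.C₂) :
    𝓜.quotBracket (𝒱.selfModule.quotBracket r s) m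
      = 𝓜.quotBracket r (𝓜.quotBracket s m) - 𝓜.quotBracket s (𝓜.quotBracket r m) := by
  induction r using Submodule.Quotient.induction_on with | _ a
  induction s using Submodule.Quotient.induction_on with | _ b
  induction m using Submodule.Quotient.induction_on with | _ m
  simp only [quotAct_mk, VertexAlg.selfModule_act, act_nmul_zero, Submodule.Quotient.mk_sub]

lemma quotBracket_quotMul_right (r s : V ⧸ 𝒱.selfModule.C₂) (m : M ⧸ 𝓜.C₂) :
    𝓜.quotBracket r (𝓜.quotMul s m)
      = 𝓜.quotMul (𝒱.selfModule.quotBracket r s) m + 𝓜.quotMul s (𝓜.quotBracket r m) := by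
  induction r using Submodule.Quotient.induction_on with | _ a
  induction s using Submodule.Quotient.induction_on with | _ b
  induction m using Submodule.Quotient.induction_on with | _ m
  simp only [quotAct_mk, VertexAlg.selfModule_act, act_nmul_zero, ← Submodule.Quotient.mk_add,
    sub_add_cancel]

lemma quotBracket_quotMul_left (r s : V ⧸ 𝒱.selfModule.C₂) (m : M ⧸ 𝓜.C₂) :
    𝓜.quotBracket (𝒱.selfModule.quotMul r s) m
      = 𝓜.quotMul r (𝓜.quotBracket s m) + 𝓜.quotMul s (𝓜.quotBracket r m) := by
  induction r using Submodule.Quotient.induction_on with | _ a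
  induction s using Submodule.Quotient.induction_on with | _ b
  induction m using Submodule.Quotient.induction_on with | _ m
  simp only [quotAct_mk, VertexAlg.selfModule_act, ← Submodule.Quotient.mk_add]
  exact (Submodule.Quotient.eq _).2 (𝓜.act_zero_nmul_neg_one_sub_mem_C₂ a b m)

end VAModuleStr

/-- For a vertex algebra `V` and a `V`-module `M`, with
`C₂(M) = span{a_{(-2)} m}`, the quotient `M/C₂(M)` is a Poisson module over
Zhu's `C₂`-algebra `R_V = V/C₂(V)`, via `ā·m̄ = (a_{(-1)}m)⁻` and
`{ā, m̄} = (a_{(0)}m)⁻`; in particular these operations are well defined on the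
quotients. -/
theorem stmt10 {V : Type*} [AddCommGroup V] [Module ℂ V] (𝒱 : VertexAlg V)
    {M : Type*} [AddCommGroup M] [Module ℂ M] (𝓜 : VAModuleStr 𝒱 M)
    (C2V : Submodule ℂ V)
    (hC2V : C2V = Submodule.span ℂ {y : V | ∃ a b : V, y = 𝒱.nmul (-2) a b})
    (C2M : Submodule ℂ M)
    (hC2M : C2M = Submodule.span ℂ {y : M | ∃ (a : V) (m : M), y = 𝓜.act (-2) a m}) :
    ∃ (mulR : (V ⧸ C2V) → (V ⧸ C2V) → (V ⧸ C2V))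
      (brR : (V ⧸ C2V) → (V ⧸ C2V) → (V ⧸ C2V))
      (sm : (V ⧸ C2V) → (M ⧸ C2M) → (M ⧸ C2M))
      (brM : (V ⧸ C2V) → (M ⧸ C2M) → (M ⧸ C2M)),
      -- well-definedness: the operations are induced by `a_{(-1)}` and `a_{(0)}`
      (∀ a b : V, mulR (Submodule.Quotient.mk a) (Submodule.Quotient.mk b) =
        Submodule.Quotient.mk (𝒱.nmul (-1) a b)) ∧
      (∀ a b : V, brR (Submodule.Quotient.mk a) (Submodule.Quotient.mk b) =
        Submodule.Quotient.mk (𝒱.nmul 0 a b)) ∧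
      (∀ (a : V) (m : M), sm (Submodule.Quotient.mk a) (Submodule.Quotient.mk m) =
        Submodule.Quotient.mk (𝓜.act (-1) a m)) ∧
      (∀ (a : V) (m : M), brM (Submodule.Quotient.mk a) (Submodule.Quotient.mk m) =
        Submodule.Quotient.mk (𝓜.act 0 a m)) ∧
      -- Poisson module axioms
      (∀ (r s : V ⧸ C2V) (m : M ⧸ C2M),
        brM (brR r s) m = brM r (brM s m) - brM s (brM r m)) ∧
      (∀ (r s : V ⧸ C2V) (m : M ⧸ C2M),
        brM r (sm s m) = sm (brR r s) m + sm s (brM r m)) ∧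
      (∀ (r s : V ⧸ C2V) (m : M ⧸ C2M),
        brM (mulR r s) m = sm r (brM s m) + sm s (brM r m)) := by
  obtain rfl : C2V = 𝒱.selfModule.C₂ := hC2V
  obtain rfl : C2M = 𝓜.C₂ := hC2M
  exact ⟨fun r s => 𝒱.selfModule.quotMul r s, fun r s => 𝒱.selfModule.quotBracket r s,
    fun r m => 𝓜.quotMul r m, fun r m => 𝓜.quotBracket r m,
    fun _ _ => rfl, fun _ _ => rfl, fun _ _ => rfl, fun _ _ => rfl,
    𝓜.quotBracket_quotBracket, 𝓜.quotBracket_quotMul_right, 𝓜.quotBracket_quotMul_left⟩
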